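/- Let q = 1/2 and let (c_{m₁,0})_{m₁≥0} be nonnegative real numbers with c_{0,0} > 80 and satisfying, for all m₁ ≥ 1, c_{m₁,0} · q^{1+m₁}(q^{√2} − q^{1+m₁}) ≥ 2 c_{0,0} c_{m₁−1,0}. Then c_{m₁,0} > c_{0,0} · q^{−m₁(m₁+1)/2} for all m₁ ≥ 1, and consequently the power series Σ_{m₁} c_{m₁,0} z₁^{m₁} has radius of convergence 0. -/
import Mathlib

/-- Divergence argument of Example 1 (`q = 1/2`): if `c_{m₁,0} ≥ 0`, `c_{0,0} > 80` and
`c_{m₁,0} q^{1+m₁}(q^{√2} − q^{1+m₁}) ≥ 2 c_{0,0} c_{m₁−1,0}` for all `m₁ ≥ 1`, then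
`c_{m₁,0} > c_{0,0} q^{−m₁(m₁+1)/2}` for all `m₁ ≥ 1`, and the power series
`Σ c_{m₁,0} z₁^{m₁}` has radius of convergence `0`. -/
theorem stmt11 (c : ℕ → ℝ) (hpos : ∀ m, 0 ≤ c m) (h0 : 80 < c 0)
    (hrec : ∀ m : ℕ, 1 ≤ m →
      2 * c 0 * c (m - 1) ≤
        c m * (1 / 2 : ℝ) ^ (1 + m) *
          ((1 / 2 : ℝ) ^ (Real.sqrt 2) - (1 / 2 : ℝ) ^ (1 + m))) :
    (∀ m : ℕ, 1 ≤ m →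
      c 0 * (1 / 2 : ℝ) ^ (-((m * (m + 1) / 2 : ℕ) : ℤ)) < c m) ∧
    (∀ z : ℝ, z ≠ 0 → ¬ Summable (fun m : ℕ => c m * z ^ m)) := by
  have hc0 : (0:ℝ) < c 0 := lt_trans (by norm_num) h0
  -- simplified recurrence: c m ≥ 2 * c 0 * c (m-1) * 2^(1+m)
  have hrec' : ∀ m : ℕ, 1 ≤ m → 2 * c 0 * c (m - 1) * 2 ^ (1 + m) ≤ c m := by
    intro m hm
    have h := hrec m hm
    have hB : ((1 / 2 : ℝ) ^ (Real.sqrt 2) - (1 / 2 : ℝ) ^ (1 + m)) ≤ 1 := by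
      have h1 : (1 / 2 : ℝ) ^ (Real.sqrt 2) ≤ 1 :=
        Real.rpow_le_one (by norm_num) (by norm_num) (Real.sqrt_nonneg 2)
      have h2 : (0:ℝ) < (1 / 2 : ℝ) ^ (1 + m) := by positivity
      linarith
    have hA : (0:ℝ) < (1 / 2 : ℝ) ^ (1 + m) := by positivity
    have hcm := hpos m
    have key : 2 * c 0 * c (m - 1) ≤ c m * (1 / 2 : ℝ) ^ (1 + m) := by
      calc 2 * c 0 * c (m - 1) ≤ c m * (1 / 2 : ℝ) ^ (1 + m) *
          ((1 / 2 : ℝ) ^ (Real.sqrt 2) - (1 / 2 : ℝ) ^ (1 + m)) := h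
        _ ≤ c m * (1 / 2 : ℝ) ^ (1 + m) * 1 := by
            apply mul_le_mul_of_nonneg_left hB (by positivity)
        _ = c m * (1 / 2 : ℝ) ^ (1 + m) := by ring
    have : (1/2:ℝ)^(1+m) = ((2:ℝ)^(1+m))⁻¹ := by
      rw [one_div, inv_pow]
    rw [this] at key
    have h2 : (0:ℝ) < 2 ^ (1 + m) := by positivity
    have hk2 := mul_le_mul_of_nonneg_right key h2.le
    have heq : c m * (2 ^ (1 + m))⁻¹ * 2 ^ (1 + m) = c m := by field_simp
    rw [heq] at hk2
    linarith
  -- main growth claim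
  have main : ∀ m : ℕ, 1 ≤ m → c 0 * 2 ^ (m * (m + 1) / 2) < c m := by
    intro m hm
    induction m with
    | zero => omega
    | succ n ih =>
      rcases Nat.eq_or_lt_of_le hm with h1 | h1
      · -- n + 1 = 1
        have hn : n = 0 := by omega
        subst hn
        have := hrec' 1 le_rfl
        simp only [Nat.sub_self] at this
        have : 2 * c 0 * c 0 * 2 ^ 2 ≤ c 1 := this
        nlinarith [hc0]
      · have hn : 1 ≤ n := by omega
        have ihn := ih hn
        have := hrec' (n+1) (by omega)
        simp only [Nat.add_sub_cancel] at this
        have htri : (n+1) * (n+1+1) / 2 = n * (n+1) / 2 + (n+1) := by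
          have he : n * (n+1) % 2 = 0 := Nat.even_iff.mp (Nat.even_mul_succ_self n)
          have hab : (n+1) * (n+1+1) = n * (n+1) + 2 * (n+1) := by ring
          omega
        rw [htri, pow_add]
        have h2pow : (0:ℝ) < 2 ^ (n * (n+1) / 2) := by positivity
        have hub : c 0 * 2 ^ (n * (n + 1) / 2) * 2 ^ (n + 1) < c (n+1) := by
          calc c 0 * 2 ^ (n * (n + 1) / 2) * 2 ^ (n + 1)
              < c n * 2 ^ (n + 1) := by
                apply mul_lt_mul_of_pos_right ihn (by positivity)
            _ ≤ 2 * c 0 * c n * 2 ^ (1 + (n+1)) := by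
                have hcn : 0 < c n := lt_trans (by positivity) ihn
                have : (2:ℝ) ^ (1 + (n+1)) = 2 * 2 ^ (n+1) := by
                  rw [pow_add]; ring
                rw [this]
                have hp : (0:ℝ) < (2:ℝ) ^ (n+1) := by positivity
                nlinarith [mul_pos hcn hp, hc0]
            _ ≤ c (n+1) := this
        linarith [hub]
  constructor
  · intro m hm
    have := main m hm
    have hz : (1/2:ℝ) ^ (-((m * (m + 1) / 2 : ℕ) : ℤ)) = 2 ^ (m * (m+1) / 2) := by
      rw [one_div, inv_zpow, ← zpow_neg, neg_neg, zpow_natCast]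
    rw [hz]; exact this
  · intro z hz hs
    have htend := hs.tendsto_atTop_zero
    obtain ⟨K, hK⟩ := pow_unbounded_of_one_lt (1 / |z|) (one_lt_two)
    have hzpos : 0 < |z| := abs_pos.mpr hz
    have hKz : 1 ≤ 2 ^ K * |z| := by
      rw [div_lt_iff₀ hzpos] at hK
      linarith
    have hlb : ∀ m : ℕ, max 1 (2*K) ≤ m → 80 ≤ |c m * z ^ m| := by
      intro m hm
      have hm1 : 1 ≤ m := le_trans (le_max_left _ _) hm
      have hmK : 2 * K ≤ m := le_trans (le_max_right _ _) hm
      have hT : m * K ≤ m * (m + 1) / 2 := by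
        have : 2 * (m * K) ≤ m * (m + 1) := by nlinarith
        omega
      have h1 : c 0 * 2 ^ (m * (m+1) / 2) < c m := main m hm1
      rw [abs_mul, abs_pow]
      have hcm : |c m| = c m := abs_of_nonneg (hpos m)
      rw [hcm]
      have hstep : (2:ℝ) ^ (m * K) ≤ 2 ^ (m * (m+1)/2) :=
        pow_le_pow_right₀ (by norm_num) hT
      have : (80:ℝ) * 1 ≤ c 0 * ((2:ℝ)^K * |z|) ^ m := by
        have h1m : (1:ℝ) ≤ (2 ^ K * |z|) ^ m := one_le_pow₀ hKz
        nlinarith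
      calc (80:ℝ) = 80 * 1 := by ring
        _ ≤ c 0 * ((2:ℝ)^K * |z|) ^ m := this
        _ = c 0 * 2 ^ (m * K) * |z| ^ m := by
            rw [mul_pow, ← pow_mul]; ring_nf
        _ ≤ c 0 * 2 ^ (m * (m+1)/2) * |z| ^ m := by
            apply mul_le_mul_of_nonneg_right _ (by positivity)
            exact mul_le_mul_of_nonneg_left hstep (le_of_lt hc0)
        _ ≤ c m * |z| ^ m := by
            apply mul_le_mul_of_nonneg_right (le_of_lt h1) (by positivity)
    have hball := htend (Metric.ball_mem_nhds (0:ℝ) (by norm_num : (0:ℝ) < 80))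
    rw [Filter.mem_map, Filter.mem_atTop_sets] at hball
    obtain ⟨N, hN⟩ := hball
    set M := max N (max 1 (2*K))
    have h1 := hN M (le_max_left _ _)
    have h2 := hlb M (le_max_right _ _)
    simp [Metric.mem_ball, Real.dist_eq] at h1
    rw [abs_mul, abs_pow] at h2
    linarith
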